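/- arXiv:2412.12315 — 2 statements merged into one kernel-verified Lean document; each statement's English description precedes it below -/
import Mathlib

section
/- Let p1, p2, p3, p4, p5 be real numbers and define H(l) = l⁵ + p1·l⁴ + p2·l³ + p3·l² + p4·l + p5, a1 = −(6/25)·p1² + (3/5)·p2, b1 = −(6/25)·p1·p2 + (2/5)·p3 + (8/125)·p1³, c1 = −(3/625)·p1⁴ + (3/125)·p1²·p2 − (2/25)·p1·p3 + (1/5)·p4, and Δ0 = a1² − 4·c1. If p5 ≥ 0, b1 = 0, Δ0 ≥ 0, a1 ≥ 0, and c1 > 0, then H has no positive real root. -/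
/-!
Shifting `l = z - p1/5` turns `H'(l) / 5` into the depressed quartic `z⁴ + a1 z² + b1 z + c1`.
When `b1 = 0`, `a1 ≥ 0` and `c1 > 0` this quartic is positive everywhere, so `H` is strictly
increasing on `ℝ`, and `H l > H 0 = p5 ≥ 0` for every `l > 0`.
-/

lemma depressed_biquadratic_pos {a c : ℝ} (ha : 0 ≤ a) (hc : 0 < c) (z : ℝ) :
    0 < z ^ 4 + a * z ^ 2 + c := by
  positivity

section Quintic

variable (p1 p2 p3 p4 p5 : ℝ)

lemma hasDerivAt_quintic (x : ℝ) :
    HasDerivAt (fun l : ℝ => l ^ 5 + p1 * l ^ 4 + p2 * l ^ 3 + p3 * l ^ 2 + p4 * l + p5)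
      (5 * x ^ 4 + 4 * p1 * x ^ 3 + 3 * p2 * x ^ 2 + 2 * p3 * x + p4) x := by
  have h := (((((hasDerivAt_pow 5 x).add ((hasDerivAt_pow 4 x).const_mul p1)).add
    ((hasDerivAt_pow 3 x).const_mul p2)).add ((hasDerivAt_pow 2 x).const_mul p3)).add
    ((hasDerivAt_id' (x := x)).const_mul p4)).add_const p5
  refine h.congr_deriv ?_
  norm_num
  ring

variable {p1 p2 p3 p4 p5} {a1 b1 c1 : ℝ}

lemma quintic_deriv_eq_depressed_quartic
    (ha1 : a1 = -(6/25) * p1 ^ 2 + (3/5) * p2)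
    (hb1 : b1 = -(6/25) * p1 * p2 + (2/5) * p3 + (8/125) * p1 ^ 3)
    (hc1 : c1 = -(3/625) * p1 ^ 4 + (3/125) * p1 ^ 2 * p2 - (2/25) * p1 * p3 + (1/5) * p4)
    (x : ℝ) :
    5 * x ^ 4 + 4 * p1 * x ^ 3 + 3 * p2 * x ^ 2 + 2 * p3 * x + p4 =
      5 * ((x + p1 / 5) ^ 4 + a1 * (x + p1 / 5) ^ 2 + b1 * (x + p1 / 5) + c1) := by
  subst ha1 hb1 hc1
  ring

lemma strictMono_quintic (ha1 : a1 = -(6/25) * p1 ^ 2 + (3/5) * p2)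
    (hb1 : b1 = -(6/25) * p1 * p2 + (2/5) * p3 + (8/125) * p1 ^ 3)
    (hc1 : c1 = -(3/625) * p1 ^ 4 + (3/125) * p1 ^ 2 * p2 - (2/25) * p1 * p3 + (1/5) * p4)
    (hb10 : b1 = 0) (ha1pos : 0 ≤ a1) (hc1pos : 0 < c1) :
    StrictMono (fun l : ℝ => l ^ 5 + p1 * l ^ 4 + p2 * l ^ 3 + p3 * l ^ 2 + p4 * l + p5) := by
  refine strictMono_of_deriv_pos fun x => ?_
  rw [(hasDerivAt_quintic p1 p2 p3 p4 p5 x).deriv,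
    quintic_deriv_eq_depressed_quartic ha1 hb1 hc1, hb10, zero_mul, add_zero]
  exact mul_pos (by norm_num) (depressed_biquadratic_pos ha1pos hc1pos _)

end Quintic

theorem stmt8_general (p1 p2 p3 p4 p5 : ℝ)
    (H : ℝ → ℝ)
    (hH : ∀ l, H l = l ^ 5 + p1 * l ^ 4 + p2 * l ^ 3 + p3 * l ^ 2 + p4 * l + p5)
    (a1 b1 c1 : ℝ)
    (ha1 : a1 = -(6/25) * p1 ^ 2 + (3/5) * p2)
    (hb1 : b1 = -(6/25) * p1 * p2 + (2/5) * p3 + (8/125) * p1 ^ 3)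
    (hc1 : c1 = -(3/625) * p1 ^ 4 + (3/125) * p1 ^ 2 * p2 - (2/25) * p1 * p3 + (1/5) * p4)
    (hp5 : 0 ≤ p5) (hb10 : b1 = 0) (ha1pos : 0 ≤ a1) (hc1pos : 0 < c1) :
    ∀ l : ℝ, 0 < l → H l ≠ 0 := by
  intro l hl
  have hH0_lt : H 0 < H l := by
    rw [hH, hH]
    exact strictMono_quintic (p5 := p5) ha1 hb1 hc1 hb10 ha1pos hc1pos hl
  have hH0 : H 0 = p5 := by simp [hH]
  linarith

theorem stmt8 (p1 p2 p3 p4 p5 : ℝ)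
    (H : ℝ → ℝ)
    (hH : ∀ l, H l = l ^ 5 + p1 * l ^ 4 + p2 * l ^ 3 + p3 * l ^ 2 + p4 * l + p5)
    (a1 b1 c1 Δ0 : ℝ)
    (ha1 : a1 = -(6/25) * p1 ^ 2 + (3/5) * p2)
    (hb1 : b1 = -(6/25) * p1 * p2 + (2/5) * p3 + (8/125) * p1 ^ 3)
    (hc1 : c1 = -(3/625) * p1 ^ 4 + (3/125) * p1 ^ 2 * p2 - (2/25) * p1 * p3 + (1/5) * p4)
    (hΔ0 : Δ0 = a1 ^ 2 - 4 * c1)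
    (hp5 : 0 ≤ p5) (hb10 : b1 = 0) (hΔ0pos : 0 ≤ Δ0) (ha1pos : 0 ≤ a1) (hc1pos : 0 < c1) :
    ∀ l : ℝ, 0 < l → H l ≠ 0 :=
  stmt8_general p1 p2 p3 p4 p5 H hH a1 b1 c1 ha1 hb1 hc1 hp5 hb10 ha1pos hc1pos
end

section
/- Let m1, m2, m3, m4, m5, n1, n2, n3, n4, n5 be real numbers. For τ2 ≥ 0 and ξ ∈ ℂ define ψ(ξ, τ2) = ξ⁵ + m1·ξ⁴ + m2·ξ³ + m3·ξ² + m4·ξ + m5 + e^{−ξτ2}·(n1·ξ⁴ + n2·ξ³ + n3·ξ² + n4·ξ + n5). Assume: (i) every ξ ∈ ℂ with ψ(ξ, 0) = 0 satisfies Re ξ < 0; (ii) m5 + n5 ≠ 0; and (iii) T > 0 is such that for all τ ∈ [0, T) and all ω > 0 one has ψ(iω, τ) ≠ 0. Then for every τ ∈ [0, T), every ξ ∈ ℂ with ψ(ξ, τ) = 0 satisfies Re ξ < 0. -/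
/-!
Zeros of an entire function depend continuously on a continuous parameter (a consequence of the
open mapping theorem), and for `Re ξ ≥ 0` the zeros of `ψ(·, τ)` stay in a fixed disc. So if some
`ψ(·, τ)` with `τ < T` had a zero with `Re ξ ≥ 0`, the least such `τ` would exist by compactness.
Its zero is off the imaginary axis (the real coefficients make zeros come in conjugate pairs, and
`ψ(0, τ) = m5 + n5 ≠ 0`), hence strictly in the right half-plane, so `τ > 0` and the zero persists
for slightly smaller delays, a contradiction.
-/

open Complex ComplexConjugate Metric Set Filter Topology Function

theorem Differentiable.exists_sphere_forall_ne_zero {g : ℂ → ℂ} (hg : Differentiable ℂ g)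
    (hne : ∃ z, g z ≠ 0) (ζ : ℂ) {r : ℝ} (hr : 0 < r) :
    ∃ ρ ∈ Ioc 0 r, ∀ z ∈ sphere ζ ρ, g z ≠ 0 := by
  have ha : AnalyticOnNhd ℂ g univ := analyticOnNhd_univ_iff_differentiable.2 hg
  rcases (ha ζ (mem_univ ζ)).eventually_eq_zero_or_eventually_ne_zero with hzero | hisol
  · obtain ⟨z, hz⟩ := hne
    exact absurd (ha.eqOn_zero_of_preconnected_of_eventuallyEq_zero isPreconnected_univ
      (mem_univ ζ) hzero (mem_univ z)) hz
  · obtain ⟨δ, hδ, hball⟩ := Metric.eventually_nhds_iff.1 (eventually_nhdsWithin_iff.1 hisol)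
    refine ⟨min (δ / 2) r, ⟨by positivity, min_le_right _ _⟩, fun z hz => hball ?_ ?_⟩
    · rw [mem_sphere.1 hz]
      exact (min_le_left _ _).trans_lt (half_lt_self hδ)
    · rintro rfl
      simp only [mem_sphere, dist_self] at hz
      exact (lt_min (half_pos hδ) hr).ne hz

theorem eventually_exists_zero_mem_closedBall {X : Type*} [TopologicalSpace X] {f : X → ℂ → ℂ}
    (hf : Continuous (uncurry f)) (hd : ∀ x, Differentiable ℂ (f x)) {x₀ : X} {ζ : ℂ}
    (hζ : f x₀ ζ = 0) (hne : ∃ z, f x₀ z ≠ 0) {r : ℝ} (hr : 0 < r) :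
    ∀ᶠ x in 𝓝 x₀, ∃ z ∈ closedBall ζ r, f x z = 0 := by
  obtain ⟨ρ, ⟨hρ, hρr⟩, hsphere⟩ := (hd x₀).exists_sphere_forall_ne_zero hne ζ hr
  obtain ⟨z₀, hz₀, hmin⟩ := (isCompact_sphere ζ ρ).exists_isMinOn
    (NormedSpace.sphere_nonempty.2 hρ.le) (hd x₀).continuous.norm.continuousOn
  set ε := ‖f x₀ z₀‖
  have hε : 0 < ε := norm_pos_iff.2 (hsphere z₀ hz₀)
  have hunif : ∀ᶠ x in 𝓝 x₀, ∀ z ∈ closedBall ζ ρ, ‖f x z - f x₀ z‖ < ε / 4 := by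
    refine (isCompact_closedBall ζ ρ).eventually_forall_of_forall_eventually fun z _ => ?_
    have hc : Continuous fun p : X × ℂ => ‖f p.1 p.2 - f x₀ p.2‖ :=
      (hf.sub ((hd x₀).continuous.comp continuous_snd)).norm
    exact hc.continuousAt.eventually_lt continuousAt_const (by simpa using hε)
  -- Near `x₀`, `f x` moves by at least `ε / 2` from `f x ζ` on the sphere while `‖f x ζ‖ < ε / 4`,
  -- so the open mapping theorem puts `0` in the image of the disc.
  filter_upwards [hunif] with x hx
  have hxζ : ‖f x ζ‖ < ε / 4 := by simpa [hζ] using hx ζ (mem_closedBall_self hρ.le)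
  have hsph : ∀ z ∈ sphere ζ ρ, ε / 2 ≤ ‖f x z - f x ζ‖ := by
    intro z hz
    have hz_min : ε ≤ ‖f x₀ z‖ := hmin hz
    have hz_close := hx z (sphere_subset_closedBall hz)
    have htri : ‖f x₀ z‖ ≤ ‖f x z - f x ζ‖ + ‖f x ζ‖ + ‖f x z - f x₀ z‖ :=
      calc ‖f x₀ z‖ = ‖(f x z - f x ζ) + f x ζ - (f x z - f x₀ z)‖ := by ring_nf
        _ ≤ _ := (norm_sub_le _ _).trans (add_le_add_left (norm_add_le _ _) _)
    linarith
  have hnc : ∃ᶠ z in 𝓝 ζ, f x z ≠ f x ζ := by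
    intro hconst
    have ha : AnalyticOnNhd ℂ (f x) univ := analyticOnNhd_univ_iff_differentiable.2 (hd x)
    have heq := ha.eqOn_of_preconnected_of_eventuallyEq analyticOnNhd_const isPreconnected_univ
      (mem_univ ζ) (hconst.mono fun z hz => not_not.1 hz)
    have := hsph z₀ hz₀
    rw [heq (mem_univ z₀), sub_self, norm_zero] at this
    linarith
  obtain ⟨z, hz, hz0⟩ := (hd x).diffContOnCl.ball_subset_image_closedBall hρ hsph hnc
    (show (0 : ℂ) ∈ ball (f x ζ) (ε / 2 / 2) by
      rw [mem_ball, dist_comm, dist_zero_right]; linarith)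
  exact ⟨z, closedBall_subset_closedBall hρr hz, hz0⟩

theorem forall_re_neg_of_no_imaginary_zeros {f : ℝ → ℂ → ℂ} (hf : Continuous (uncurry f))
    (hd : ∀ t, Differentiable ℂ (f t)) {R τ₀ : ℝ} (hτ₀ : 0 ≤ τ₀)
    (hbound : ∀ t ∈ Icc 0 τ₀, ∀ z, 0 ≤ z.re → f t z = 0 → ‖z‖ ≤ R)
    (hstable : ∀ z, f 0 z = 0 → z.re < 0)
    (himag : ∀ t ∈ Icc 0 τ₀, ∀ z, z.re = 0 → f t z ≠ 0) :
    ∀ z, f τ₀ z = 0 → z.re < 0 := by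
  intro z₀ hz₀
  by_contra! hre₀
  set Z : Set (ℝ × ℂ) := (Icc 0 τ₀ ×ˢ (closedBall 0 R ∩ {z | 0 ≤ z.re})) ∩ {p | uncurry f p = 0}
  have hZ : IsCompact Z := ((isCompact_Icc.prod ((isCompact_closedBall 0 R).inter_right
    (isClosed_le continuous_const continuous_re))).inter_right (isClosed_eq hf continuous_const))
  have hmem : ∀ t z, t ∈ Icc 0 τ₀ → 0 ≤ z.re → f t z = 0 → t ∈ Prod.fst '' Z := fun t z ht hz h =>
    ⟨(t, z), ⟨⟨ht, mem_closedBall_zero_iff.2 (hbound t ht z hz h), hz⟩, h⟩, rfl⟩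
  obtain ⟨_, ⟨⟨σ, ζ⟩, ⟨⟨hσ, -, hζre⟩, hζ⟩, rfl⟩, hleast⟩ :=
    (hZ.image continuous_fst).exists_isLeast ⟨τ₀, hmem τ₀ z₀ ⟨hτ₀, le_rfl⟩ hre₀ hz₀⟩
  change f σ ζ = 0 at hζ
  have hζpos : 0 < ζ.re := hζre.lt_of_ne' (fun h => himag σ hσ ζ h hζ)
  have hσpos : 0 < σ := hσ.1.lt_of_ne' (by rintro rfl; linarith [hstable ζ hζ])
  have hne : ∃ z, f σ z ≠ 0 := by
    refine ⟨((|R| + 1 : ℝ) : ℂ), fun h => ?_⟩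
    have := hbound σ hσ _ (by rw [ofReal_re]; positivity) h
    rw [norm_real, Real.norm_of_nonneg (by positivity)] at this
    linarith [le_abs_self R]
  obtain ⟨t, ⟨z, hz, hzt⟩, ht⟩ := ((eventually_exists_zero_mem_closedBall hf hd hζ hne
    (half_pos hζpos)).filter_mono nhdsWithin_le_nhds |>.and (Ioo_mem_nhdsLT hσpos)).exists
  have hzre : 0 ≤ z.re := by
    have := (abs_re_le_norm (z - ζ)).trans (mem_closedBall_iff_norm.1 hz)
    rw [sub_re, abs_le] at this
    linarith
  exact not_le.2 ht.2 (hleast (hmem t z ⟨ht.1.le, ht.2.le.trans hσ.2⟩ hzre hzt))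

theorem ne_zero_of_re_eq_zero_of_conj {g : ℂ → ℂ} (hconj : ∀ z, g (conj z) = conj (g z))
    (h0 : g 0 ≠ 0) (hpos : ∀ ω : ℝ, 0 < ω → g (ω * I) ≠ 0) {z : ℂ} (hz : z.re = 0) :
    g z ≠ 0 := by
  have hz' : z = z.im * I := by apply Complex.ext <;> simp [hz]
  rcases lt_trichotomy z.im 0 with hneg | hzero | hposim
  · intro h
    have hconj_z : ((-z.im : ℝ) : ℂ) * I = conj z := by apply Complex.ext <;> simp [hz]
    exact hpos (-z.im) (neg_pos.2 hneg) (by rw [hconj_z, hconj, h, map_zero])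
  · rwa [hz', hzero, ofReal_zero, zero_mul]
  · rw [hz']; exact hpos _ hposim

noncomputable def quartic (a b c d e : ℝ) (z : ℂ) : ℂ :=
  a * z ^ 4 + b * z ^ 3 + c * z ^ 2 + d * z + e

noncomputable def charQuasiPoly (m1 m2 m3 m4 m5 n1 n2 n3 n4 n5 τ : ℝ) (ξ : ℂ) : ℂ :=
  ξ ^ 5 + quartic m1 m2 m3 m4 m5 ξ + exp (-ξ * τ) * quartic n1 n2 n3 n4 n5 ξ

theorem quartic_conj (a b c d e : ℝ) (z : ℂ) :
    quartic a b c d e (conj z) = conj (quartic a b c d e z) := by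
  simp [quartic]

theorem norm_quartic_le (a b c d e : ℝ) {z : ℂ} (hz : 1 ≤ ‖z‖) :
    ‖quartic a b c d e z‖ ≤ (|a| + |b| + |c| + |d| + |e|) * ‖z‖ ^ 4 := by
  have h1 : ‖z‖ ≤ ‖z‖ ^ 4 := le_self_pow₀ hz (by norm_num)
  have h2 : ‖z‖ ^ 2 ≤ ‖z‖ ^ 4 := pow_le_pow_right₀ hz (by norm_num)
  have h3 : ‖z‖ ^ 3 ≤ ‖z‖ ^ 4 := pow_le_pow_right₀ hz (by norm_num)
  have h0 : 1 ≤ ‖z‖ ^ 4 := one_le_pow₀ hz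
  calc ‖quartic a b c d e z‖
      ≤ ‖(a : ℂ) * z ^ 4‖ + ‖(b : ℂ) * z ^ 3‖ + ‖(c : ℂ) * z ^ 2‖ + ‖(d : ℂ) * z‖ + ‖(e : ℂ)‖ :=
        (norm_add_le _ _).trans (add_le_add_left ((norm_add_le _ _).trans
          (add_le_add_left norm_add₃_le _)) _)
    _ = |a| * ‖z‖ ^ 4 + |b| * ‖z‖ ^ 3 + |c| * ‖z‖ ^ 2 + |d| * ‖z‖ + |e| := by
        simp only [norm_mul, norm_pow, norm_real, Real.norm_eq_abs]
    _ ≤ (|a| + |b| + |c| + |d| + |e|) * ‖z‖ ^ 4 := by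
        nlinarith [abs_nonneg b, abs_nonneg c, abs_nonneg d, abs_nonneg e]

section charQuasiPoly

variable {m1 m2 m3 m4 m5 n1 n2 n3 n4 n5 : ℝ}

theorem continuous_uncurry_charQuasiPoly :
    Continuous (uncurry (charQuasiPoly m1 m2 m3 m4 m5 n1 n2 n3 n4 n5)) := by
  unfold charQuasiPoly quartic uncurry
  fun_prop

theorem differentiable_charQuasiPoly (τ : ℝ) :
    Differentiable ℂ (charQuasiPoly m1 m2 m3 m4 m5 n1 n2 n3 n4 n5 τ) := by
  unfold charQuasiPoly quartic
  fun_prop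

theorem charQuasiPoly_conj (τ : ℝ) (ξ : ℂ) :
    charQuasiPoly m1 m2 m3 m4 m5 n1 n2 n3 n4 n5 τ (conj ξ) =
      conj (charQuasiPoly m1 m2 m3 m4 m5 n1 n2 n3 n4 n5 τ ξ) := by
  simp only [charQuasiPoly, quartic_conj, map_add, map_mul, map_pow, ← exp_conj, map_neg,
    conj_ofReal]

theorem norm_le_of_charQuasiPoly_eq_zero {τ : ℝ} {ξ : ℂ} (hτ : 0 ≤ τ) (hξ : 0 ≤ ξ.re)
    (h : charQuasiPoly m1 m2 m3 m4 m5 n1 n2 n3 n4 n5 τ ξ = 0) :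
    ‖ξ‖ ≤ max 1 (|m1| + |m2| + |m3| + |m4| + |m5| + (|n1| + |n2| + |n3| + |n4| + |n5|)) := by
  by_contra! hlt
  rw [max_lt_iff] at hlt
  have hexp : ‖exp (-ξ * τ)‖ ≤ 1 := by
    rw [norm_exp, Real.exp_le_one_iff]
    simpa using mul_nonneg hξ hτ
  set M := |m1| + |m2| + |m3| + |m4| + |m5| + (|n1| + |n2| + |n3| + |n4| + |n5|)
  have hroot : ξ ^ 5 = -(quartic m1 m2 m3 m4 m5 ξ + exp (-ξ * τ) * quartic n1 n2 n3 n4 n5 ξ) := by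
    unfold charQuasiPoly at h
    linear_combination h
  have hpow : ‖ξ‖ * ‖ξ‖ ^ 4 ≤ M * ‖ξ‖ ^ 4 :=
    calc ‖ξ‖ * ‖ξ‖ ^ 4
        = ‖quartic m1 m2 m3 m4 m5 ξ + exp (-ξ * τ) * quartic n1 n2 n3 n4 n5 ξ‖ := by
          rw [← pow_succ', ← norm_pow, hroot, norm_neg]
      _ ≤ ‖quartic m1 m2 m3 m4 m5 ξ‖ + 1 * ‖quartic n1 n2 n3 n4 n5 ξ‖ :=
          (norm_add_le _ _).trans (add_le_add le_rfl ((norm_mul_le _ _).trans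
            (mul_le_mul_of_nonneg_right hexp (norm_nonneg _))))
      _ ≤ M * ‖ξ‖ ^ 4 := by
          have := norm_quartic_le m1 m2 m3 m4 m5 hlt.1.le
          have := norm_quartic_le n1 n2 n3 n4 n5 hlt.1.le
          linarith
  exact hlt.2.not_ge (le_of_mul_le_mul_right hpow (pow_pos (zero_lt_one.trans hlt.1) 4))

end charQuasiPoly

theorem stmt15_general (m1 m2 m3 m4 m5 n1 n2 n3 n4 n5 : ℝ)
    (ψ : ℂ → ℝ → ℂ)
    (hψ : ∀ (ξ : ℂ) (τ2 : ℝ), ψ ξ τ2 =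
        ξ ^ 5 + (m1 : ℂ) * ξ ^ 4 + (m2 : ℂ) * ξ ^ 3 + (m3 : ℂ) * ξ ^ 2 +
          (m4 : ℂ) * ξ + (m5 : ℂ) +
          Complex.exp (-ξ * (τ2 : ℂ)) *
            ((n1 : ℂ) * ξ ^ 4 + (n2 : ℂ) * ξ ^ 3 + (n3 : ℂ) * ξ ^ 2 + (n4 : ℂ) * ξ + (n5 : ℂ)))
    (hstable0 : ∀ ξ : ℂ, ψ ξ 0 = 0 → ξ.re < 0)
    (hconst : m5 + n5 ≠ 0)
    (T : ℝ)
    (hnoim : ∀ τ : ℝ, 0 ≤ τ → τ < T → ∀ ω : ℝ, 0 < ω → ψ ((ω : ℂ) * Complex.I) τ ≠ 0) :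
    ∀ τ : ℝ, 0 ≤ τ → τ < T → ∀ ξ : ℂ, ψ ξ τ = 0 → ξ.re < 0 := by
  set f := charQuasiPoly m1 m2 m3 m4 m5 n1 n2 n3 n4 n5
  have hψf : ∀ ξ τ, ψ ξ τ = f τ ξ := fun ξ τ => by
    rw [hψ]; simp only [f, charQuasiPoly, quartic]; ring
  intro τ hτ hτT ξ hξ
  rw [hψf] at hξ
  refine forall_re_neg_of_no_imaginary_zeros continuous_uncurry_charQuasiPoly
    differentiable_charQuasiPoly hτ
    (fun t ht z hz => norm_le_of_charQuasiPoly_eq_zero ht.1 hz)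
    (fun z hz => hstable0 z (by rwa [hψf])) (fun t ht z hz => ?_) ξ hξ
  refine ne_zero_of_re_eq_zero_of_conj (charQuasiPoly_conj t) ?_ (fun ω hω => ?_) hz
  · simpa [f, charQuasiPoly, quartic] using ofReal_ne_zero.2 hconst
  · simpa only [hψf] using hnoim t ht.1 (ht.2.trans_lt hτT) ω hω

theorem stmt15 (m1 m2 m3 m4 m5 n1 n2 n3 n4 n5 : ℝ)
    (ψ : ℂ → ℝ → ℂ)
    (hψ : ∀ (ξ : ℂ) (τ2 : ℝ), ψ ξ τ2 =
        ξ ^ 5 + (m1 : ℂ) * ξ ^ 4 + (m2 : ℂ) * ξ ^ 3 + (m3 : ℂ) * ξ ^ 2 +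
          (m4 : ℂ) * ξ + (m5 : ℂ) +
          Complex.exp (-ξ * (τ2 : ℂ)) *
            ((n1 : ℂ) * ξ ^ 4 + (n2 : ℂ) * ξ ^ 3 + (n3 : ℂ) * ξ ^ 2 + (n4 : ℂ) * ξ + (n5 : ℂ)))
    (hstable0 : ∀ ξ : ℂ, ψ ξ 0 = 0 → ξ.re < 0)
    (hconst : m5 + n5 ≠ 0)
    (T : ℝ) (hT : 0 < T)
    (hnoim : ∀ τ : ℝ, 0 ≤ τ → τ < T → ∀ ω : ℝ, 0 < ω → ψ ((ω : ℂ) * Complex.I) τ ≠ 0) :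
    ∀ τ : ℝ, 0 ≤ τ → τ < T → ∀ ξ : ℂ, ψ ξ τ = 0 → ξ.re < 0 :=
  stmt15_general m1 m2 m3 m4 m5 n1 n2 n3 n4 n5 ψ hψ hstable0 hconst T hnoim
end
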